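/- arXiv:1403.2052 — 6 statements merged into one kernel-verified Lean document; each statement's English description precedes it below -/
import Mathlib

section
/- If m, m' : G → ℂ are exponentials on an abelian group, a, a' : G → ℂ are additive functions, b, b' ∈ ℂ, and (a(x)+b)·m(x) = (a'(x)+b')·m'(x) for all x in G with a+b not identically zero... then m = m', a = a', and b = b'. -/
theorem exponential_polynomial_unique {G : Type*} [AddCommGroup G]
    (m m' : G → ℂ) (a a' : G → ℂ) (b b' : ℂ)
    (hm : m ≠ 0) (hmmul : ∀ x y : G, m (x + y) = m x * m y)
    (hm' : m' ≠ 0) (hm'mul : ∀ x y : G, m' (x + y) = m' x * m' y)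
    (ha : ∀ x y : G, a (x + y) = a x + a y)
    (ha' : ∀ x y : G, a' (x + y) = a' x + a' y)
    (hnz : a ≠ 0 ∨ b ≠ 0)
    (heq : ∀ x : G, (a x + b) * m x = (a' x + b') * m' x) :
    m = m' ∧ a = a' ∧ b = b' := by
  classical
  obtain ⟨x0, hx0⟩ := Function.ne_iff.mp hm
  obtain ⟨x1, hx1⟩ := Function.ne_iff.mp hm'
  have hm0 : m 0 = 1 := by
    have h := hmmul x0 0
    rw [add_zero] at h
    exact (mul_left_cancel₀ hx0 (by rw [← h, mul_one])).symm
  have hm'0 : m' 0 = 1 := by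
    have h := hm'mul x1 0
    rw [add_zero] at h
    exact (mul_left_cancel₀ hx1 (by rw [← h, mul_one])).symm
  have hmne : ∀ x, m x ≠ 0 := by
    intro x
    have h := hmmul x (-x)
    rw [add_neg_cancel, hm0] at h
    exact left_ne_zero_of_mul_eq_one h.symm
  have hm'ne : ∀ x, m' x ≠ 0 := by
    intro x
    have h := hm'mul x (-x)
    rw [add_neg_cancel, hm'0] at h
    exact left_ne_zero_of_mul_eq_one h.symm
  have ha0 : a 0 = 0 := by
    have h := ha 0 0
    rw [add_zero] at h
    linear_combination -h
  have ha'0 : a' 0 = 0 := by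
    have h := ha' 0 0
    rw [add_zero] at h
    linear_combination -h
  set f : G → ℂ := fun x => m' x * (m x)⁻¹ with hf
  have hfne : ∀ x, f x ≠ 0 := fun x => mul_ne_zero (hm'ne x) (inv_ne_zero (hmne x))
  have hf0 : f 0 = 1 := by simp [hf, hm0, hm'0]
  have hfmul : ∀ x y, f (x + y) = f x * f y := by
    intro x y
    simp only [hf]
    rw [hmmul, hm'mul]
    field_simp
  have hkey : ∀ x, a x + b = (a' x + b') * f x := by
    intro x
    have h : (a x + b) * m x * (m x)⁻¹ = (a' x + b') * (m' x * (m x)⁻¹) := by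
      rw [heq x]; ring
    rwa [mul_assoc, mul_inv_cancel₀ (hmne x), mul_one] at h
  have star2 : ∀ x y, (a x + b) * (1 - f y) + (a y + b) * (1 - f x)
      = b - b' * (f x * f y) := by
    intro x y
    have h1 := hkey (x + y)
    rw [ha, ha', hfmul] at h1
    linear_combination h1 - f y * hkey x - f x * hkey y
  have hb' : b' = b := by
    have h := star2 0 0
    rw [ha0, hf0] at h
    linear_combination h
  subst hb'
  have main : ∀ x, f x = 1 := by
    by_contra hcon
    push_neg at hcon
    obtain ⟨y0, hy0⟩ := hcon
    have key : ∀ x y, (a y0 + b' - b' * f y0) * (f x - 1) * (f y - 1) = 0 := by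
      intro x y
      have h1 := star2 (x + y) y0
      rw [ha, hfmul] at h1
      have h2 := star2 x y0
      have h3 := star2 y y0
      linear_combination h2 + h3 - h1
    rcases eq_or_ne (a y0 + b' - b' * f y0) 0 with hγ | hγ
    · have hc1 : (1 : ℂ) - f y0 ≠ 0 := sub_ne_zero.mpr (Ne.symm hy0)
      have hp : ∀ x, a x = 0 := by
        intro x
        have h2 := star2 x y0
        have key2 : a x * (1 - f y0) = 0 := by
          linear_combination h2 - (1 - f x) * hγ
        rcases mul_eq_zero.mp key2 with h | h
        · exact h
        · exact absurd h hc1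
      have haz : a = 0 := funext fun x => hp x
      have hbz : b' ≠ 0 := by
        rcases hnz with h | h
        · exact absurd haz h
        · exact h
      have h2 : b' * (1 - f y0) = 0 := by
        linear_combination hγ - hp y0
      rcases mul_eq_zero.mp h2 with h3 | h3
      · exact absurd h3 hbz
      · exact hy0 (by linear_combination -h3)
    · have hk := key y0 y0
      rcases mul_eq_zero.mp hk with h | h
      · rcases mul_eq_zero.mp h with h' | h'
        · exact hγ h'
        · exact hy0 (by linear_combination h')
      · exact hy0 (by linear_combination h)
  have hmeq : m = m' := by
    funext x
    have h := main x
    simp only [hf] at h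
    field_simp [hmne x] at h
    exact h.symm
  have habeq : ∀ x, a x + b' = a' x + b' := by
    intro x
    have h := heq x
    rw [← hmeq] at h
    exact mul_right_cancel₀ (hmne x) h
  refine ⟨hmeq, funext fun x => ?_, rfl⟩
  linear_combination habeq x
end

section
/- Let m : G → ℂ be an exponential, α, β, γ ∈ ℂ, and T : G → ℂ a function constant on cosets of 2G (i.e., T(x+2z) = T(x) for all x, z in G). Then H(x) = αγ m(x) - βγ m(-x) + T(x), g(x) = α m(x) + β m(-x), h(x) = (γ/2)(m(x) - m(-x)) satisfy H(x+y) - H(x-y) = 2g(x)h(y) for all x, y in G. -/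
theorem dAlembert_odd_solution_i {G : Type*} [AddCommGroup G]
    (m : G → ℂ) (α β γ : ℂ) (T : G → ℂ)
    (hm : m ≠ 0) (hmmul : ∀ x y : G, m (x + y) = m x * m y)
    (hT : ∀ x z : G, T (x + 2 • z) = T x) :
    ∀ x y : G,
      ((α * γ * m (x + y) - β * γ * m (-(x + y)) + T (x + y)) -
       (α * γ * m (x - y) - β * γ * m (-(x - y)) + T (x - y))) =
      2 * (α * m x + β * m (-x)) * (γ / 2 * (m y - m (-y))) := by
  intro x y
  have hTxy : T (x + y) = T (x - y) := by
    have := hT (x - y) y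
    rw [← this]
    congr 1
    abel
  rw [hTxy, show -(x + y) = -x + -y by abel, show x - y = x + -y by abel,
    show -(x + -y) = -x + y by abel, hmmul, hmmul, hmmul, hmmul]
  ring
end

section
/- Let m₀ : G → ℂ be an even exponential, a : G → ℂ additive, b ∈ ℂ, α ∈ ℂ nonzero, and T a 2G-periodic function. Then H(x) = (a(x)+b)m₀(x) + T(x), g(x) = m₀(x)/α, h(x) = α a(x) m₀(x) satisfy H(x+y) - H(x-y) = 2g(x)h(y) for all x, y in G. -/
theorem dAlembert_odd_solution_ii {G : Type*} [AddCommGroup G]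
    (m₀ : G → ℂ) (a : G → ℂ) (b α : ℂ) (hα : α ≠ 0) (T : G → ℂ)
    (hm₀ : m₀ ≠ 0) (hmul : ∀ x y : G, m₀ (x + y) = m₀ x * m₀ y)
    (heven : ∀ x : G, m₀ (-x) = m₀ x)
    (ha : ∀ x y : G, a (x + y) = a x + a y)
    (hT : ∀ x z : G, T (x + 2 • z) = T x) :
    ∀ x y : G,
      (((a (x + y) + b) * m₀ (x + y) + T (x + y)) -
       ((a (x - y) + b) * m₀ (x - y) + T (x - y))) =
      2 * (m₀ x / α) * (α * a y * m₀ y) := by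
  intro x y
  have ha0 : a 0 = 0 := by have := ha 0 0; simpa using this
  have haneg : ∀ z : G, a (-z) = - a z := by
    intro z
    have := ha z (-z)
    simp [ha0] at this
    linear_combination -this
  have hsub : a (x - y) = a x - a y := by
    rw [sub_eq_add_neg, ha, haneg]; ring
  have hmsub : m₀ (x - y) = m₀ x * m₀ y := by
    rw [sub_eq_add_neg, hmul, heven]
  have hTeq : T (x + y) = T (x - y) := by
    have := hT (x - y) y
    rw [← this]
    congr 1
    abel
  rw [ha, hsub, hmul, hmsub, hTeq]
  field_simp
  ring
end

section
/- Let m : G → ℂ be an exponential, α, β, γ, δ ∈ ℂ, and T : G → ℂ a 2G-periodic function. Then F₁(x) = αγ m(x) + βδ m(-x) + T(x), F₂(x) = αδ m(x) + βγ m(-x) - T(x), g(x) = α m(x) + β m(-x), h(x) = γ m(x) + δ m(-x) satisfy F₁(x+y) + F₂(x-y) = g(x)h(y) for all x, y in G. -/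
theorem main_case_i {G : Type*} [AddCommGroup G]
    (m : G → ℂ) (α β γ δ : ℂ) (T : G → ℂ)
    (hm : m ≠ 0) (hmmul : ∀ x y : G, m (x + y) = m x * m y)
    (hT : ∀ x z : G, T (x + 2 • z) = T x) :
    ∀ x y : G,
      (α * γ * m (x + y) + β * δ * m (-(x + y)) + T (x + y)) +
      (α * δ * m (x - y) + β * γ * m (-(x - y)) - T (x - y)) =
      (α * m x + β * m (-x)) * (γ * m y + δ * m (-y)) := by
  intro x y
  have hTxy : T (x + y) = T (x - y) := by
    have h := hT (x - y) y
    rw [two_smul] at h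
    have : x - y + (y + y) = x + y := by abel
    rw [this] at h
    exact h
  have h1 : m (x + y) = m x * m y := hmmul x y
  have h2 : m (-(x + y)) = m (-x) * m (-y) := by
    rw [neg_add]; exact hmmul _ _
  have h3 : m (x - y) = m x * m (-y) := by
    rw [sub_eq_add_neg]; exact hmmul _ _
  have h4 : m (-(x - y)) = m (-x) * m y := by
    rw [neg_sub, ← neg_add_eq_sub]; exact hmmul _ _
  rw [hTxy, h1, h2, h3, h4]; ring
end

section
/- Let m₀ : G → ℂ be an even exponential, a : G → ℂ additive, α, β, γ ∈ ℂ with α ≠ 0, and T a 2G-periodic function. Then F₁(x) = ½(a(x)+αβ+γ)m₀(x) + T(x), F₂(x) = ½(-a(x)+αβ-γ)m₀(x) - T(x), g(x) = α m₀(x), h(x) = (a(x)/α + β)m₀(x) satisfy F₁(x+y) + F₂(x-y) = g(x)h(y) for all x, y in G. -/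
theorem main_case_ii {G : Type*} [AddCommGroup G]
    (m₀ : G → ℂ) (a : G → ℂ) (α β γ : ℂ) (hα : α ≠ 0) (T : G → ℂ)
    (hm₀ : m₀ ≠ 0) (hmul : ∀ x y : G, m₀ (x + y) = m₀ x * m₀ y)
    (heven : ∀ x : G, m₀ (-x) = m₀ x)
    (ha : ∀ x y : G, a (x + y) = a x + a y)
    (hT : ∀ x z : G, T (x + 2 • z) = T x) :
    ∀ x y : G,
      ((1 / 2) * (a (x + y) + α * β + γ) * m₀ (x + y) + T (x + y)) +
      ((1 / 2) * (-a (x - y) + α * β - γ) * m₀ (x - y) - T (x - y)) =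
      (α * m₀ x) * ((a y / α + β) * m₀ y) := by
  intro x y
  have ha0 : a 0 = 0 := by have := ha 0 0; simp at this; linear_combination this
  have haneg : a (-y) = -a y := by
    have := ha y (-y); simp [ha0] at this; linear_combination -this
  have hsub : a (x - y) = a x - a y := by
    rw [sub_eq_add_neg, ha, haneg]; ring
  have hmsub : m₀ (x - y) = m₀ x * m₀ y := by
    rw [sub_eq_add_neg, hmul, heven]
  have hTxy : T (x + y) = T (x - y) := by
    have := hT (x - y) y
    rw [two_smul] at this
    have h2 : x - y + (y + y) = x + y := by abel
    rw [h2] at this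
    exact this
  rw [hmul, hsub, hmsub, hTxy, ha]
  field_simp
  ring
end

section
/- Let G be a finite abelian group, μ : G → ℂ a weight, m₀ : G → ℂ an even exponential with μ̂(m₀) = Σ_t m₀(-t)μ(t) ≠ 0, a : G → ℂ additive, and β ∈ ℂ. Then f(x) = (a(x)/(2μ̂(m₀)) + β)m₀(x) and k(x) = 2μ̂(m₀)m₀(x) satisfy Σ_t [f(x+y-t) + f(x-y+t)]μ(t) = f(x)k(y) for all x, y in G. -/
theorem gajda_solution_ii {G : Type*} [AddCommGroup G] [Fintype G]
    (μ : G → ℂ) (m₀ : G → ℂ) (a : G → ℂ) (β : ℂ)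
    (hm₀ : m₀ ≠ 0) (hmul : ∀ x y : G, m₀ (x + y) = m₀ x * m₀ y)
    (heven : ∀ x : G, m₀ (-x) = m₀ x)
    (ha : ∀ x y : G, a (x + y) = a x + a y)
    (hμ : (∑ t : G, m₀ (-t) * μ t) ≠ 0) :
    ∀ x y : G,
      ∑ t : G, (((a (x + y - t) / (2 * ∑ s : G, m₀ (-s) * μ s) + β) * m₀ (x + y - t)) +
        ((a (x - y + t) / (2 * ∑ s : G, m₀ (-s) * μ s) + β) * m₀ (x - y + t))) * μ t =
      ((a x / (2 * ∑ s : G, m₀ (-s) * μ s) + β) * m₀ x) *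
        (2 * (∑ s : G, m₀ (-s) * μ s) * m₀ y) := by
  intro x y
  set M : ℂ := ∑ s : G, m₀ (-s) * μ s with hM
  have hMne : M ≠ 0 := hμ
  have hm : ∀ u v : G, m₀ (u - v) = m₀ u * m₀ v := by
    intro u v
    rw [sub_eq_add_neg, hmul, heven]
  have key : ∀ t : G, (((a (x + y - t) / (2 * M) + β) * m₀ (x + y - t)) +
      ((a (x - y + t) / (2 * M) + β) * m₀ (x - y + t))) * μ t
      = (a x / M + 2 * β) * (m₀ x * m₀ y) * (m₀ (-t) * μ t) := by
    intro t
    have h1 : m₀ (x + y - t) = m₀ x * m₀ y * m₀ (-t) := by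
      rw [hm, hmul, heven]
    have h2 : m₀ (x - y + t) = m₀ x * m₀ y * m₀ (-t) := by
      rw [hmul, hm, heven]
    have h3 : a (x + y - t) + a (x - y + t) = 2 * a x := by
      have h := ha (x + y - t) (x - y + t)
      have e : (x + y - t) + (x - y + t) = x + x := by abel
      rw [e, ha] at h
      linear_combination -h
    rw [h1, h2]
    field_simp
    linear_combination (m₀ x * m₀ y * m₀ (-t) * μ t) * h3
  rw [Finset.sum_congr rfl (fun t _ => key t), ← Finset.mul_sum, ← hM]
  field_simp
end
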